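/- Let m_1, m_2, m_3, m_4 be positive reals satisfying the planar 4-body central configuration equations with x_1 = e^{2πi/3}, x_2 = e^{4πi/3}, x_3 = 1, x_4 = 0, angular velocity ω and center of mass c_0. Then adding the equation for k = 3 to the equation for k = 4 yields: (1−q_1)/|1−q_1|³ · m_1 + (1−q_2)/|1−q_2|³ · m_2 + m_4 + (m_1 q_1 + m_2 q_2 + m_3) = ω², a real number; and this implies m_1 = m_2. -/

import Mathlib

open Complex Finset
open scoped Real ComplexConjugate

/-! Subtracting the central configuration equations at the bodies `1` and `0` eliminates the
centre of mass and leaves the displayed sum equal to `ω²`. As `q₂ = q̄₁`, `|q₁| = 1` and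
`|1 - q₁| = |1 - q₂| = √3`, the imaginary part of that sum is `Im q₁ (m₁ - m₂) (1 - 3^{-3/2})`,
which vanishes only when `m₁ = m₂`. -/

theorem exp_two_pi_mul_I_div_three : exp (2 * π * I / 3) = ⟨-1 / 2, √3 / 2⟩ := by
  have hcos : Real.cos (2 * π / 3) = -1 / 2 := by
    rw [show 2 * π / 3 = π - π / 3 by ring, Real.cos_pi_sub, Real.cos_pi_div_three]; ring
  have hsin : Real.sin (2 * π / 3) = √3 / 2 := by
    rw [show 2 * π / 3 = π - π / 3 by ring, Real.sin_pi_sub, Real.sin_pi_div_three]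
  apply Complex.ext <;> simp [exp_re, exp_im, hcos, hsin]

theorem exp_four_pi_mul_I_div_three : exp (4 * π * I / 3) = conj (exp (2 * π * I / 3)) := by
  have h : 4 * π * I / 3 = conj (2 * π * I / 3) + 2 * π * I := by
    simp only [map_div₀, map_mul, map_ofNat, conj_ofReal, conj_I]; ring
  rw [← exp_conj, h, exp_add, exp_two_pi_mul_I, mul_one]

theorem norm_exp_two_pi_mul_I_div_three : ‖exp (2 * π * I / 3)‖ = 1 := by
  simp [norm_exp]

theorem norm_one_sub_exp_two_pi_mul_I_div_three : ‖1 - exp (2 * π * I / 3)‖ = √3 := by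
  rw [exp_two_pi_mul_I_div_three, norm_def]
  congr 1
  simp only [normSq_apply, sub_re, one_re, sub_im, one_im]
  ring_nf
  norm_num

theorem im_sum_conj_pair {q : ℂ} (a b c d : ℝ) :
    ((1 - q) / ‖1 - q‖ ^ 3 * a + (1 - conj q) / ‖1 - conj q‖ ^ 3 * b + c
      + (a * q + b * conj q + d)).im = q.im * (a - b) * (1 - 1 / ‖1 - q‖ ^ 3) := by
  have hnorm : ‖1 - conj q‖ = ‖1 - q‖ := by rw [← norm_conj, map_sub, map_one, conj_conj]
  rw [hnorm]
  simp only [← ofReal_pow, add_im, mul_im, div_ofReal_re, div_ofReal_im, sub_re, sub_im, one_re,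
    one_im, ofReal_re, ofReal_im, conj_re, conj_im]
  ring

theorem eq_of_sum_conj_pair_real {q : ℂ} (hq : q.im ≠ 0) (hr : ‖1 - q‖ ≠ 1) {a b c d w : ℝ}
    (h : (1 - q) / ‖1 - q‖ ^ 3 * a + (1 - conj q) / ‖1 - conj q‖ ^ 3 * b + c
      + (a * q + b * conj q + d) = w) : a = b := by
  have him := congrArg im h
  rw [im_sum_conj_pair, ofReal_im] at him
  have hr3 : ‖1 - q‖ ^ 3 ≠ 1 := fun h =>
    hr ((pow_eq_one_iff_of_nonneg (norm_nonneg _) three_ne_zero).mp h)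
  simpa [hq, hr3, sub_eq_zero] using him

theorem sum_eq_sq_of_central_config {q₁ q₂ : ℂ} {m : Fin 4 → ℝ} {ω : ℝ} {c₀ : ℂ}
    (hcc : ∀ k : Fin 4, ∑ j ∈ univ.erase k, (m j : ℂ) * (![q₁, q₂, 1, 0] j - ![q₁, q₂, 1, 0] k)
      / ‖![q₁, q₂, 1, 0] j - ![q₁, q₂, 1, 0] k‖ ^ 3 = -((ω : ℂ) ^ 2) * (![q₁, q₂, 1, 0] k - c₀)) :
    (1 - q₁) / ‖1 - q₁‖ ^ 3 * m 0 + (1 - q₂) / ‖1 - q₂‖ ^ 3 * m 1 + m 3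
      + (m 0 * q₁ / ‖q₁‖ ^ 3 + m 1 * q₂ / ‖q₂‖ ^ 3 + m 2) = (ω : ℂ) ^ 2 := by
  have h₂ := hcc 2
  have h₃ := hcc 3
  simp only [sum_erase_eq_sub (mem_univ _), Fin.sum_univ_four, Matrix.cons_val, sub_self,
    mul_zero, zero_div, sub_zero, zero_sub, norm_one, ofReal_one, one_pow, div_one,
    norm_sub_rev _ (1 : ℂ)] at h₂ h₃
  linear_combination h₃ - h₂

theorem four_body_sum_real_implies_equal_general
    (q₁ q₂ : ℂ)
    (hq₁ : q₁ = Complex.exp (2 * Real.pi * Complex.I / 3))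
    (hq₂ : q₂ = Complex.exp (4 * Real.pi * Complex.I / 3))
    (m : Fin 4 → ℝ)
    (x : Fin 4 → ℂ) (hx : x = ![q₁, q₂, 1, 0])
    (ω : ℝ)
    (c₀ : ℂ)
    (hcc : ∀ k : Fin 4,
      ∑ j ∈ Finset.univ.erase k,
          (m j : ℂ) * (x j - x k) / ‖x j - x k‖^3
        = -((ω : ℂ)^2) * (x k - c₀)) :
    ((1 - q₁) / ‖1 - q₁‖^3 * (m 0 : ℂ)
      + (1 - q₂) / ‖1 - q₂‖^3 * (m 1 : ℂ) + (m 3 : ℂ)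
      + ((m 0 : ℂ) * q₁ + (m 1 : ℂ) * q₂ + (m 2 : ℂ)) = ((ω^2 : ℝ) : ℂ))
    ∧ m 0 = m 1 := by
  subst hx
  have hsum := sum_eq_sq_of_central_config hcc
  have hq₂_conj : q₂ = conj q₁ := by rw [hq₁, hq₂, exp_four_pi_mul_I_div_three]
  have hnorm₁ : ‖q₁‖ = 1 := hq₁ ▸ norm_exp_two_pi_mul_I_div_three
  have hnorm₂ : ‖q₂‖ = 1 := by rw [hq₂_conj, norm_conj, hnorm₁]
  simp only [hnorm₁, hnorm₂, ofReal_one, one_pow, div_one] at hsum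
  refine ⟨by push_cast; exact hsum, ?_⟩
  have him : q₁.im ≠ 0 := by rw [hq₁, exp_two_pi_mul_I_div_three]; positivity
  have hr : ‖1 - q₁‖ ≠ 1 := by rw [hq₁, norm_one_sub_exp_two_pi_mul_I_div_three]; norm_num
  subst hq₂_conj
  exact eq_of_sum_conj_pair_real him hr (w := ω ^ 2) (by push_cast; exact hsum)

/-- Planar 4-body problem with bodies at `q₁ = e^{2πi/3}`, `q₂ = e^{4πi/3}`, `1` and `0`.
Adding the central configuration equation for `k = 3` to the one for `k = 4` yields
`(1−q₁)/|1−q₁|³ m₁ + (1−q₂)/|1−q₂|³ m₂ + m₄ + (m₁q₁ + m₂q₂ + m₃) = ω²`, a real number,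
and this implies `m₁ = m₂`. -/
theorem four_body_sum_real_implies_equal
    (q₁ q₂ : ℂ)
    (hq₁ : q₁ = Complex.exp (2 * Real.pi * Complex.I / 3))
    (hq₂ : q₂ = Complex.exp (4 * Real.pi * Complex.I / 3))
    (m : Fin 4 → ℝ) (hm : ∀ j, 0 < m j)
    (x : Fin 4 → ℂ) (hx : x = ![q₁, q₂, 1, 0])
    (ω : ℝ) (hω : 0 < ω)
    (c₀ : ℂ)
    (hc₀ : c₀ = (∑ j : Fin 4, (m j : ℂ) * x j) / ((∑ j : Fin 4, m j : ℝ) : ℂ))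
    (hcc : ∀ k : Fin 4,
      ∑ j ∈ Finset.univ.erase k,
          (m j : ℂ) * (x j - x k) / ‖x j - x k‖^3
        = -((ω : ℂ)^2) * (x k - c₀)) :
    ((1 - q₁) / ‖1 - q₁‖^3 * (m 0 : ℂ)
      + (1 - q₂) / ‖1 - q₂‖^3 * (m 1 : ℂ) + (m 3 : ℂ)
      + ((m 0 : ℂ) * q₁ + (m 1 : ℂ) * q₂ + (m 2 : ℂ)) = ((ω^2 : ℝ) : ℂ))
    ∧ m 0 = m 1 :=
  four_body_sum_real_implies_equal_general q₁ q₂ hq₁ hq₂ m x hx ω c₀ hcc
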